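/- arXiv:2601.14618 — 2 statements merged into one kernel-verified Lean document; each statement's English description precedes it below -/
import Mathlib

section
/- Let G be a finite solvable group acting primitively and faithfully on a finite set Ω of size n, so that G has a unique minimal normal subgroup V, which is an elementary abelian p-group for some prime p and acts regularly on Ω (hence n = |V|). Let g ∈ G with g ≠ 1, let n(g) be the number of cycles of g on Ω (the number of orbits of ⟨g⟩ on Ω), let s(g) be the number of fixed points of g on Ω, and let o(g) be the order of g. Then: (i) 2·n(g) ≤ n + s(g); (ii) o(g)·p·n(g) ≤ (p + o(g) − 1)·n; and (iii) 4·n(g) ≤ 3·n. -/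
/-!
Part (i) holds for any permutation: a cycle that is not a fixed point has length at least 2.

For (ii), Burnside's lemma writes `o(g) · n(g)` as the sum over `h ∈ ⟨g⟩` of the number of fixed
points of `h`. If `h ≠ 1` fixes `ω₀`, then `h • (v • ω₀) = (h v h⁻¹) • ω₀` for `v ∈ V`, so by
regularity of the normal subgroup `V` the fixed points of `h` are the images of `ω₀` under the
centralizer `C_V(h)`. By faithfulness this is a proper subgroup of the `p`-group `V`, hence
`h` fixes at most `n / p` points. Finally (iii) follows from (ii) because `o(g), p ≥ 2`.
-/

open MulAction Pointwise

/-- A group action is preprimitive if it is transitive and every block is trivial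
(a subsingleton or the whole set). -/
def IsPreprimitive (G X : Type*) [Group G] [MulAction G X] : Prop :=
  MulAction.IsPretransitive G X ∧
    ∀ B : Set X, MulAction.IsBlock G B → B.Subsingleton ∨ B = Set.univ

theorem MulAction.fixedPoints_zpowers {G α : Type*} [Group G] [MulAction G α] (g : G) :
    fixedPoints (Subgroup.zpowers g) α = fixedBy α g := by
  ext a
  rw [mem_fixedPoints, Subgroup.forall_zpowers]
  exact mem_fixedBy_zpowers_iff_mem_fixedBy

theorem MulAction.two_mul_card_orbitRel_quotient_le (H Ω : Type*) [Group H] [MulAction H Ω]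
    [Finite Ω] :
    2 * Nat.card (orbitRel.Quotient H Ω) ≤ Nat.card Ω + Nat.card (fixedPoints H Ω) := by
  classical
  have := Fintype.ofFinite Ω
  let π : Ω → orbitRel.Quotient H Ω := Quotient.mk _
  have hπ (s : Finset Ω) : Set.MapsTo π s (Finset.univ : Finset (orbitRel.Quotient H Ω)) :=
    fun _ _ => Finset.mem_univ _
  rw [Nat.card_eq_fintype_card, ← Finset.card_univ, Nat.card_eq_fintype_card (α := Ω),
    ← Finset.card_univ (α := Ω), Nat.card_eq_card_toFinset,
    Finset.card_eq_sum_card_fiberwise (hπ _), Finset.card_eq_sum_card_fiberwise (hπ _),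
    Finset.card_eq_sum_ones, Finset.mul_sum, ← Finset.sum_add_distrib]
  refine Finset.sum_le_sum fun q _ => ?_
  obtain ⟨ω, rfl⟩ : ∃ ω, π ω = q := ⟨_, q.out_eq⟩
  by_cases hω : ω ∈ fixedPoints H Ω
  · have hfixed : 0 < ({a ∈ (fixedPoints H Ω).toFinset | π a = π ω} : Finset Ω).card :=
      Finset.card_pos.2 ⟨ω, by simpa using hω⟩
    have horbit : 0 < ({a | π a = π ω} : Finset Ω).card := Finset.card_pos.2 ⟨ω, by simp⟩
    omega
  · obtain ⟨h, hh⟩ : ∃ h : H, h • ω ≠ ω := by simpa [mem_fixedPoints] using hω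
    have horbit : 1 < ({a | π a = π ω} : Finset Ω).card :=
      Finset.one_lt_card.2 ⟨h • ω, by simp [π], ω, by simp, hh⟩
    omega

theorem MulAction.card_mul_mul_card_orbitRel_quotient_le {H Ω : Type*} [Group H] [Finite H]
    [MulAction H Ω] [Finite Ω] {p : ℕ}
    (hfix : ∀ h : H, h ≠ 1 → p * Nat.card (fixedBy Ω h) ≤ Nat.card Ω) :
    Nat.card H * p * Nat.card (orbitRel.Quotient H Ω) ≤ (p + Nat.card H - 1) * Nat.card Ω := by
  classical
  have := Fintype.ofFinite H
  have := Fintype.ofFinite Ω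
  have hburnside :
      ∑ h : H, Nat.card (fixedBy Ω h) = Nat.card (orbitRel.Quotient H Ω) * Nat.card H := by
    simpa only [Nat.card_eq_fintype_card] using sum_card_fixedBy_eq_card_orbits_mul_card_group H Ω
  calc Nat.card H * p * Nat.card (orbitRel.Quotient H Ω)
      = ∑ h, p * Nat.card (fixedBy Ω h) := by rw [← Finset.mul_sum, hburnside]; ring
    _ = p * Nat.card (fixedBy Ω (1 : H)) +
          ∑ h ∈ Finset.univ.erase (1 : H), p * Nat.card (fixedBy Ω h) :=
        (Finset.add_sum_erase _ _ (Finset.mem_univ 1)).symm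
    _ ≤ p * Nat.card Ω + ∑ h ∈ Finset.univ.erase (1 : H), Nat.card Ω := by
        gcongr with h hh
        · exact Finite.card_subtype_le _
        · exact hfix h (Finset.ne_of_mem_erase hh)
    _ = (p + Nat.card H - 1) * Nat.card Ω := by
        rw [Finset.sum_const, Finset.card_erase_of_mem (Finset.mem_univ 1), Finset.card_univ,
          smul_eq_mul, ← Nat.card_eq_fintype_card, Nat.add_sub_assoc Nat.card_pos, add_mul]

theorem MulAction.smul_left_bijective_of_free {K Ω : Type*} [Group K] [MulAction K Ω]
    [IsPretransitive K Ω] (hfree : ∀ (k : K) (ω : Ω), k • ω = ω → k = 1) (ω₀ : Ω) :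
    Function.Bijective fun k : K => k • ω₀ := by
  refine ⟨fun k l hkl => ?_, fun ω => exists_smul_eq K ω₀ ω⟩
  have := hfree (l⁻¹ * k) ω₀ (by rw [mul_smul]; exact inv_smul_eq_iff.2 hkl)
  exact (inv_mul_eq_one.1 this).symm

theorem smul_smul_eq_conj_smul_of_smul_eq {G Ω : Type*} [Group G] [MulAction G Ω] {h : G}
    {ω₀ : Ω} (hω₀ : h • ω₀ = ω₀) (v : G) : h • v • ω₀ = (h * v * h⁻¹) • ω₀ := by
  rw [mul_smul, mul_smul, inv_smul_eq_iff.2 hω₀.symm]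

theorem IsPGroup.mul_card_le_of_ne_top {p : ℕ} [Fact p.Prime] {P : Type*} [Group P] [Finite P]
    (hP : IsPGroup p P) {K : Subgroup P} (hK : K ≠ ⊤) : p * Nat.card K ≤ Nat.card P := by
  obtain ⟨k, hk⟩ := hP.index K
  have hk0 : k ≠ 0 := by
    rintro rfl
    exact hK (Subgroup.index_eq_one.1 (by simpa using hk))
  calc p * Nat.card K ≤ K.index * Nat.card K :=
        Nat.mul_le_mul_right _ (hk ▸ le_self_pow (Fact.out : p.Prime).one_lt.le hk0)
    _ = Nat.card P := K.index_mul_card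

section RegularNormalSubgroup

variable {G Ω : Type*} [Group G] [MulAction G Ω] {V : Subgroup G} [V.Normal]
  [IsPretransitive V Ω] (hVfree : ∀ (v : V) (ω : Ω), v • ω = ω → v = 1)
include hVfree

theorem card_fixedBy_eq_card_centralizer_subgroupOf {h : G} {ω₀ : Ω} (hω₀ : h • ω₀ = ω₀) :
    Nat.card (fixedBy Ω h) = Nat.card ((Subgroup.centralizer {h}).subgroupOf V) := by
  have hbij := smul_left_bijective_of_free hVfree ω₀
  refine (Nat.card_congr ((Equiv.ofBijective _ hbij).subtypeEquiv fun v => ?_)).symm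
  have hconj : h * v * h⁻¹ ∈ V := ‹V.Normal›.conj_mem v v.2 h
  rw [Subgroup.mem_subgroupOf, Subgroup.mem_centralizer_singleton_iff, Equiv.ofBijective_apply,
    mem_fixedBy, Subgroup.smul_def, smul_smul_eq_conj_smul_of_smul_eq hω₀]
  change _ ↔ (⟨_, hconj⟩ : V) • ω₀ = v • ω₀
  rw [hbij.injective.eq_iff, Subtype.ext_iff, mul_inv_eq_iff_eq_mul, eq_comm]

theorem mul_card_fixedBy_le [FaithfulSMul G Ω] [Finite G] {p : ℕ} [Fact p.Prime]
    (hV : IsPGroup p V) {h : G} (hh : h ≠ 1) :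
    p * Nat.card (fixedBy Ω h) ≤ Nat.card Ω := by
  rcases (fixedBy Ω h).eq_empty_or_nonempty with hempty | ⟨ω₀, hω₀⟩
  · simp [hempty]
  have hbij := smul_left_bijective_of_free hVfree ω₀
  have hne : (Subgroup.centralizer {h}).subgroupOf V ≠ ⊤ := by
    rw [Ne, Subgroup.subgroupOf_eq_top]
    refine fun hVh => hh (eq_of_smul_eq_smul (α := Ω) fun ω => ?_)
    obtain ⟨v, rfl⟩ := hbij.surjective ω
    dsimp only
    rw [one_smul, Subgroup.smul_def, smul_smul_eq_conj_smul_of_smul_eq hω₀,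
      ← Subgroup.mem_centralizer_singleton_iff.1 (hVh v.2), mul_inv_cancel_right]
  rw [card_fixedBy_eq_card_centralizer_subgroupOf hVfree hω₀,
    ← Nat.card_congr (Equiv.ofBijective _ hbij)]
  exact hV.mul_card_le_of_ne_top hne

end RegularNormalSubgroup

theorem four_mul_le_three_mul_of_mul_le {o p N n : ℕ} (ho : 2 ≤ o) (hp : 2 ≤ p)
    (h : o * p * N ≤ (p + o - 1) * n) : 4 * N ≤ 3 * n := by
  have hop : 4 * (p + o - 1) ≤ 3 * (o * p) := by
    zify [show 1 ≤ p + o by omega]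
    nlinarith
  refine Nat.le_of_mul_le_mul_left ?_ (by positivity : 0 < o * p)
  linarith [Nat.mul_le_mul_right n hop]

theorem stmt_3_general {G Ω : Type*} [Group G] [Finite G] [Finite Ω] [MulAction G Ω]
    [FaithfulSMul G Ω]
    (n : ℕ) (hn : n = Nat.card Ω)
    (p : ℕ) (hp : p.Prime)
    (V : Subgroup G) [V.Normal]
    -- `V` is an elementary abelian `p`-group
    (hVelem : ∀ x : V, x ^ p = 1)
    -- `V` acts regularly on `Ω`
    (hVtrans : MulAction.IsPretransitive V Ω)
    (hVfree : ∀ (v : V) (ω : Ω), v • ω = ω → v = 1)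
    (g : G) (hg : g ≠ 1) :
    2 * Nat.card (MulAction.orbitRel.Quotient (Subgroup.zpowers g) Ω) ≤
        n + Nat.card {ω : Ω | g • ω = ω} ∧
      orderOf g * p * Nat.card (MulAction.orbitRel.Quotient (Subgroup.zpowers g) Ω) ≤
        (p + orderOf g - 1) * n ∧
      4 * Nat.card (MulAction.orbitRel.Quotient (Subgroup.zpowers g) Ω) ≤ 3 * n := by
  have := Fact.mk hp
  have hV : IsPGroup p V := fun v => ⟨1, by simpa using hVelem v⟩
  have hcycles := two_mul_card_orbitRel_quotient_le (Subgroup.zpowers g) Ω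
  rw [fixedPoints_zpowers] at hcycles
  have hburnside := card_mul_mul_card_orbitRel_quotient_le (Ω := Ω) (p := p)
    fun (h : Subgroup.zpowers g) hh => mul_card_fixedBy_le hVfree hV (by simpa using hh)
  rw [Nat.card_zpowers] at hburnside
  have ho : 2 ≤ orderOf g := (orderOf_pos g).nat_succ_le.lt_of_ne' (by simpa using hg)
  subst hn
  exact ⟨hcycles, hburnside, four_mul_le_three_mul_of_mul_le ho hp.two_le hburnside⟩

/-- Let `G` be a finite solvable group acting primitively and faithfully on a
finite set `Ω` of size `n`, so that `G` has a unique minimal normal subgroup `V`, which is an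
elementary abelian `p`-group for some prime `p` and acts regularly on `Ω` (hence `n = |V|`).
Let `g ∈ G` with `g ≠ 1`, `n(g)` the number of cycles of `g` on `Ω` (orbits of `⟨g⟩`), `s(g)`
the number of fixed points of `g`, and `o(g)` the order of `g`. Then
(i) `2·n(g) ≤ n + s(g)`; (ii) `o(g)·p·n(g) ≤ (p + o(g) − 1)·n`; (iii) `4·n(g) ≤ 3·n`. -/
theorem stmt_3 {G Ω : Type*} [Group G] [Finite G] [Finite Ω] [MulAction G Ω]
    [FaithfulSMul G Ω]
    (hsolv : IsSolvable G) (hprim : _root_.IsPreprimitive G Ω)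
    (n : ℕ) (hn : n = Nat.card Ω)
    (p : ℕ) (hp : p.Prime)
    (V : Subgroup G) [V.Normal] (hVnt : V ≠ ⊥)
    -- `V` is the unique minimal normal subgroup of `G`
    (hVmin : ∀ N : Subgroup G, N.Normal → N ≠ ⊥ → V ≤ N)
    -- `V` is an elementary abelian `p`-group
    (hVab : ∀ x y : V, x * y = y * x) (hVelem : ∀ x : V, x ^ p = 1)
    -- `V` acts regularly on `Ω`
    (hVtrans : MulAction.IsPretransitive V Ω)
    (hVfree : ∀ (v : V) (ω : Ω), v • ω = ω → v = 1)
    (g : G) (hg : g ≠ 1) :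
    2 * Nat.card (MulAction.orbitRel.Quotient (Subgroup.zpowers g) Ω) ≤
        n + Nat.card {ω : Ω | g • ω = ω} ∧
      orderOf g * p * Nat.card (MulAction.orbitRel.Quotient (Subgroup.zpowers g) Ω) ≤
        (p + orderOf g - 1) * n ∧
      4 * Nat.card (MulAction.orbitRel.Quotient (Subgroup.zpowers g) Ω) ≤ 3 * n :=
  stmt_3_general n hn p hp V hVelem hVtrans hVfree g hg
end

section
/- Let G be a finite solvable group acting faithfully on a finite set Ω of size n (a solvable permutation group of degree n), and let H be a nilpotent subgroup of G. Then |H| ≤ 2^n. -/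
/-!
Induct on `|H|`. The centre `Z` of `H` is nontrivial and normal, so `H` permutes the `Z`-orbits
`O₁, …, Oₘ`. The image of `H` in `Sym({O₁, …, Oₘ})` is nilpotent and strictly smaller than `H`
(it kills `Z`), so it has order at most `2 ^ m`. The kernel centralises `Z` and maps every `Z`-orbit
to itself, so each of its elements is determined by the images of one point per orbit: it has
order at most `∏ |Oᵢ|`. Hence `|H| ≤ 2 ^ m * ∏ |Oᵢ| = ∏ 2 |Oᵢ| ≤ ∏ 2 ^ |Oᵢ| = 2 ^ n`.
-/

open MulAction

theorem Nat.two_mul_le_two_pow {c : ℕ} (hc : 1 ≤ c) : 2 * c ≤ 2 ^ c := by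
  obtain ⟨d, rfl⟩ := Nat.exists_eq_add_of_le' hc
  have := d.lt_two_pow_self
  rw [pow_succ]
  omega

theorem two_pow_card_mul_card_pi_le_two_pow_card_sigma {ι : Type*} {β : ι → Type*} [Finite ι]
    [∀ i, Finite (β i)] [∀ i, Nonempty (β i)] :
    2 ^ Nat.card ι * Nat.card (∀ i, β i) ≤ 2 ^ Nat.card (Σ i, β i) := by
  have := Fintype.ofFinite ι
  have := fun i => Fintype.ofFinite (β i)
  rw [Nat.card_pi, Nat.card_sigma, ← Finset.prod_pow_eq_pow_sum, Nat.card_eq_fintype_card,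
    ← Finset.card_univ, ← Finset.prod_const, ← Finset.prod_mul_distrib]
  exact Finset.prod_le_prod' fun i _ => Nat.two_mul_le_two_pow Nat.card_pos

namespace MulAction

variable {G α : Type*} [Group G] [MulAction G α]

theorem two_pow_card_orbitRel_quotient_mul_card_pi_orbit_le [Finite α] :
    2 ^ Nat.card (orbitRel.Quotient G α) * Nat.card (∀ q : orbitRel.Quotient G α, q.orbit) ≤
      2 ^ Nat.card α := by
  have (q : orbitRel.Quotient G α) : Nonempty q.orbit := q.nonempty_orbit.to_subtype
  rw [Nat.card_congr (selfEquivSigmaOrbits' G α)]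
  exact two_pow_card_mul_card_pi_le_two_pow_card_sigma

section Normal

variable (N : Subgroup G) [N.Normal]

instance : SMul G (orbitRel.Quotient N α) where
  smul g := Quotient.map' (g • ·) fun x y hxy => by
    rw [orbitRel_apply, ← orbit_eq_iff] at hxy ⊢
    rw [← smul_orbit_eq_orbit_smul, ← smul_orbit_eq_orbit_smul, hxy]

theorem orbitRel.Quotient.smul_mk (g : G) (x : α) :
    g • (Quotient.mk'' x : orbitRel.Quotient N α) = Quotient.mk'' (g • x) := rfl

instance : MulAction G (orbitRel.Quotient N α) where
  one_smul q := q.inductionOn' fun x => by rw [orbitRel.Quotient.smul_mk, one_smul]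
  mul_smul g h q := q.inductionOn' fun x => by simp only [orbitRel.Quotient.smul_mk, mul_smul]

theorem orbitRel.Quotient.smul_mk_eq_mk_iff (g : G) (x : α) :
    g • (Quotient.mk'' x : orbitRel.Quotient N α) = Quotient.mk'' x ↔
      g • x ∈ MulAction.orbit N x := by
  rw [smul_mk, Quotient.eq'', orbitRel_apply]

theorem le_ker_toPermHom_orbitRel_quotient :
    N ≤ (toPermHom G (orbitRel.Quotient N α)).ker := by
  intro n hn
  ext q
  induction q using Quotient.inductionOn' with
  | h x => exact (orbitRel.Quotient.smul_mk_eq_mk_iff N n x).mpr ⟨⟨n, hn⟩, rfl⟩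

end Normal

theorem smul_eq_smul_of_mem_orbit {N : Subgroup G} {g h : G} (hg : g ∈ Subgroup.centralizer N)
    (hh : h ∈ Subgroup.centralizer N) {x y : α} (hxy : g • x = h • x) (hy : y ∈ orbit N x) :
    g • y = h • y := by
  obtain ⟨⟨n, hn⟩, rfl⟩ := hy
  dsimp only
  rw [Subgroup.mk_smul, smul_smul, ← Subgroup.mem_centralizer_iff.mp hg n hn, mul_smul, hxy,
    smul_smul, Subgroup.mem_centralizer_iff.mp hh n hn, mul_smul]

theorem card_le_card_pi_orbit [FaithfulSMul G α] [Finite α] {N K : Subgroup G}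
    (hK : K ≤ Subgroup.centralizer N) (hKN : ∀ k ∈ K, ∀ x : α, k • x ∈ orbit N x) :
    Nat.card K ≤ Nat.card (∀ q : orbitRel.Quotient N α, q.orbit) := by
  have hmem (k : K) (q : orbitRel.Quotient N α) : (k : G) • q.out ∈ q.orbit := by
    rw [orbitRel.Quotient.orbit_eq_orbit_out q Quotient.out_eq']
    exact hKN k k.2 q.out
  refine Nat.card_le_card_of_injective (fun k q => ⟨(k : G) • q.out, hmem k q⟩) fun k l hkl => ?_
  refine Subtype.ext (eq_of_smul_eq_smul (α := α) fun x => ?_)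
  have hx : x ∈ orbit N (Quotient.mk'' x : orbitRel.Quotient N α).out := by
    rw [← orbitRel_apply, ← Quotient.eq'', Quotient.out_eq']
  exact smul_eq_smul_of_mem_orbit (hK k.2) (hK l.2)
    (congrArg Subtype.val (congrFun hkl _)) hx

theorem card_le_card_range_mul_card_pi_orbit [FaithfulSMul G α] [Finite α] :
    Nat.card G ≤ Nat.card (toPermHom G (orbitRel.Quotient (Subgroup.center G) α)).range *
      Nat.card (∀ q : orbitRel.Quotient (Subgroup.center G) α, q.orbit) := by
  set φ := toPermHom G (orbitRel.Quotient (Subgroup.center G) α)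
  have hker : φ.ker ≤ Subgroup.centralizer (Subgroup.center G) := by
    rw [Subgroup.centralizer_eq_top_iff_subset.mpr subset_rfl]
    exact le_top
  have hker_orbit (k : G) (hk : k ∈ φ.ker) (x : α) : k • x ∈ orbit (Subgroup.center G) x :=
    (orbitRel.Quotient.smul_mk_eq_mk_iff _ k x).mp
      (Equiv.ext_iff.mp (MonoidHom.mem_ker.mp hk) (Quotient.mk'' x))
  calc Nat.card G = Nat.card φ.range * Nat.card φ.ker := by
        rw [← Subgroup.index_ker φ, mul_comm, φ.ker.card_mul_index]
    _ ≤ _ := Nat.mul_le_mul_left _ (card_le_card_pi_orbit hker hker_orbit)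

theorem card_range_toPermHom_orbitRel_quotient_lt [Finite G] {N : Subgroup G} [N.Normal]
    (hN : N ≠ ⊥) : Nat.card (toPermHom G (orbitRel.Quotient N α)).range < Nat.card G := by
  set φ := toPermHom G (orbitRel.Quotient N α)
  have hker : 1 < Nat.card φ.ker := φ.ker.one_lt_card_iff_ne_bot.mpr
    (ne_bot_of_le_ne_bot hN (le_ker_toPermHom_orbitRel_quotient N))
  have : Finite φ.range := Finite.of_surjective _ φ.rangeRestrict_surjective
  rw [← φ.ker.card_mul_index, Subgroup.index_ker φ]
  exact lt_mul_left (Nat.card_pos (α := φ.range)) hker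

end MulAction

theorem Equiv.Perm.card_subgroup_le_two_pow_of_isNilpotent {α : Type*} [Finite α]
    (H : Subgroup (Perm α)) [Group.IsNilpotent H] : Nat.card H ≤ 2 ^ Nat.card α := by
  induction h : Nat.card H using Nat.strong_induction_on generalizing α H with
  | _ m ih =>
  subst h
  rcases subsingleton_or_nontrivial H with hH | hH
  · exact (Finite.card_le_one_iff_subsingleton.mpr hH).trans Nat.one_le_two_pow
  set Q := orbitRel.Quotient (Subgroup.center H) α
  set φ := toPermHom H Q
  have : Group.IsNilpotent φ.range :=
    Group.nilpotent_of_surjective φ.rangeRestrict φ.rangeRestrict_surjective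
  have hφ : Nat.card φ.range < Nat.card H :=
    card_range_toPermHom_orbitRel_quotient_lt (Group.IsNilpotent.center_ne_bot H)
  calc Nat.card H ≤ Nat.card φ.range * Nat.card (∀ q : Q, q.orbit) :=
        card_le_card_range_mul_card_pi_orbit
    _ ≤ 2 ^ Nat.card Q * Nat.card (∀ q : Q, q.orbit) :=
        Nat.mul_le_mul_right _ (ih _ hφ φ.range rfl)
    _ ≤ 2 ^ Nat.card α := two_pow_card_orbitRel_quotient_mul_card_pi_orbit_le

theorem MulAction.card_le_two_pow_of_isNilpotent {G α : Type*} [Group G] [MulAction G α]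
    [FaithfulSMul G α] [Finite α] [Group.IsNilpotent G] : Nat.card G ≤ 2 ^ Nat.card α := by
  let e : G ≃* (toPermHom G α).range := MonoidHom.ofInjective toPerm_injective
  have : Group.IsNilpotent (toPermHom G α).range := Group.nilpotent_of_mulEquiv e
  rw [Nat.card_congr e.toEquiv]
  exact Equiv.Perm.card_subgroup_le_two_pow_of_isNilpotent _

theorem stmt_4_general {G Ω : Type*} [Group G] [Finite Ω] [MulAction G Ω]
    [FaithfulSMul G Ω]
    (n : ℕ) (hn : Nat.card Ω = n)
    (H : Subgroup G) (hHnil : Group.IsNilpotent H) :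
    Nat.card H ≤ 2 ^ n :=
  hn ▸ MulAction.card_le_two_pow_of_isNilpotent

/-- Let `G` be a finite solvable group acting faithfully on a finite set `Ω` of
size `n` (a solvable permutation group of degree `n`), and let `H` be a nilpotent subgroup of
`G`. Then `|H| ≤ 2^n`. -/
theorem stmt_4 {G Ω : Type*} [Group G] [Finite G] [Finite Ω] [MulAction G Ω]
    [FaithfulSMul G Ω]
    (hsolv : IsSolvable G)
    (n : ℕ) (hn : Nat.card Ω = n)
    (H : Subgroup G) (hHnil : Group.IsNilpotent H) :
    Nat.card H ≤ 2 ^ n :=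
  stmt_4_general n hn H hHnil
end
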